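/- arXiv:1810.00416 — 2 statements merged into one kernel-verified Lean document; each statement's English description precedes it below -/
import Mathlib

section
/- Let (Q,·) be a quasigroup and (S₁, S₂, S₃) a subsquare of Q with S₁, S₂, S₃ nonempty. Fix u ∈ S₁ and v ∈ S₂ and define the principal loop isotope x ⊕ y = (x/v) · (u\y). Then S₃ is closed under ⊕, i.e., S₃ ⊕ S₃ ⊆ S₃, and contains the unit element u·v; in particular S₃ is a subloop of (Q, ⊕). -/
/-- A quasigroup: a binary operation with left and right division. -/
structure Quasigroup (Q : Type*) where
  mul : Q → Q → Q
  ldiv : Q → Q → Q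
  rdiv : Q → Q → Q
  mul_ldiv : ∀ x z, mul x (ldiv x z) = z
  ldiv_mul : ∀ x y, ldiv x (mul x y) = y
  rdiv_mul : ∀ z y, mul (rdiv z y) y = z
  mul_rdiv : ∀ x y, rdiv (mul x y) y = x

/-- `(S₁, S₂, S₃)` is a subsquare of the quasigroup `q`. -/
def IsSubsquare {Q : Type*} (q : Quasigroup Q) (S₁ S₂ S₃ : Set Q) : Prop :=
  (∀ x ∈ S₁, ∀ y ∈ S₂, q.mul x y ∈ S₃) ∧
  (∀ x ∈ S₁, ∀ z ∈ S₃, q.ldiv x z ∈ S₂) ∧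
  (∀ z ∈ S₃, ∀ y ∈ S₂, q.rdiv z y ∈ S₁)

theorem subsquare_is_subloop_of_principal_isotope_general {Q : Type*} (q : Quasigroup Q)
    (S₁ S₂ S₃ : Set Q) (hS : IsSubsquare q S₁ S₂ S₃)
    (u v : Q) (hu : u ∈ S₁) (hv : v ∈ S₂)
    (op : Q → Q → Q) (hop : ∀ x y, op x y = q.mul (q.rdiv x v) (q.ldiv u y)) :
    (∀ x ∈ S₃, ∀ y ∈ S₃, op x y ∈ S₃) ∧ q.mul u v ∈ S₃ := by
  obtain ⟨mul_mem, ldiv_mem, rdiv_mem⟩ := hS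
  refine ⟨fun x hx y hy => ?_, mul_mem u hu v hv⟩
  rw [hop]
  exact mul_mem _ (rdiv_mem x hx v hv) _ (ldiv_mem u hu y hy)

/-- For a nonempty subsquare `(S₁,S₂,S₃)` and `u ∈ S₁`, `v ∈ S₂`, the set `S₃`
is closed under the principal loop isotope `x ⊕ y = (x/v)·(u\y)` and contains
its unit element `u·v`; in particular `S₃` is a subloop of `(Q,⊕)`. -/
theorem subsquare_is_subloop_of_principal_isotope {Q : Type*} (q : Quasigroup Q)
    (S₁ S₂ S₃ : Set Q) (hS : IsSubsquare q S₁ S₂ S₃)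
    (h₁ : S₁.Nonempty) (h₂ : S₂.Nonempty) (h₃ : S₃.Nonempty)
    (u v : Q) (hu : u ∈ S₁) (hv : v ∈ S₂)
    (op : Q → Q → Q) (hop : ∀ x y, op x y = q.mul (q.rdiv x v) (q.ldiv u y)) :
    (∀ x ∈ S₃, ∀ y ∈ S₃, op x y ∈ S₃) ∧ q.mul u v ∈ S₃ :=
  subsquare_is_subloop_of_principal_isotope_general q S₁ S₂ S₃ hS u v hu hv op hop
end

section
/- Let Σ be an abstract light dual multinet labeled by a quasigroup Q, β : P → PG(2, 𝕃) a weak projective embedding of Σ, and B ⊆ P a merged block of β, i.e., B = β⁻¹(ℓ) for a projective line ℓ, |B| > 1, and B is not a block of Σ. If B meets at least two of the components P₁, P₂, P₃, then the triple (S₁, S₂, S₃), where S_i = {x ∈ Q : α_i(x) ∈ B}, is a subsquare of Q; in particular |S₁| = |S₂| = |S₃|. -/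
open Projectivization

/-- An abstract light dual multinet with point set `P`, labeled by the
quasigroup `q` via the labeling maps `α₁, α₂, α₃`. -/
structure LightDualMultinet {Q P : Type*} (q : Quasigroup Q) where
  α₁ : Q → P
  α₂ : Q → P
  α₃ : Q → P
  inj₁ : Function.Injective α₁
  inj₂ : Function.Injective α₂
  inj₃ : Function.Injective α₃
  disj₁₂ : Disjoint (Set.range α₁) (Set.range α₂)
  disj₁₃ : Disjoint (Set.range α₁) (Set.range α₃)
  disj₂₃ : Disjoint (Set.range α₂) (Set.range α₃)
  cover : Set.range α₁ ∪ Set.range α₂ ∪ Set.range α₃ = Set.univ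
  M : Set (Set P)
  at_most_one : ∀ B ∈ M, ∀ C ∈ M, ∀ p p' : P,
    p ≠ p' → p ∈ B → p' ∈ B → p ∈ C → p' ∈ C → B = C
  collinear : ∀ x y : Q, ∃ B ∈ M, α₁ x ∈ B ∧ α₂ y ∈ B ∧ α₃ (q.mul x y) ∈ B
  nondegenerate : ∃ B ∈ M, ∃ C ∈ M, B ≠ C

/-!
A line `ℓ` meets a block of `Σ` in at most one point or contains it: if two
distinct points of the block lie on `ℓ`, the block is collinear, so its third
point lies on `ℓ` as well. Applied to the block through `α₁ x`, `α₂ y`,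
`α₃ (x · y)`, this says that whenever two of the three memberships
`x ∈ S₁`, `y ∈ S₂`, `x · y ∈ S₃` hold, so does the third, which is the
subsquare property. Once `S₁` and `S₂` are nonempty, left and right
translations then biject `S₂` and `S₁` onto `S₃`.
-/

namespace Quasigroup

variable {Q : Type*} (q : Quasigroup Q)

theorem mul_right_injective (x : Q) : Function.Injective (q.mul x) := fun a b h => by
  rw [← q.ldiv_mul x a, h, q.ldiv_mul]

theorem mul_left_injective (y : Q) : Function.Injective (q.mul · y) := fun a b h => by
  rw [← q.mul_rdiv a y, ← q.mul_rdiv b y]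
  exact congrArg (q.rdiv · y) h

end Quasigroup

namespace IsSubsquare

variable {Q : Type*} {q : Quasigroup Q} {S₁ S₂ S₃ : Set Q}

theorem image_mul_left (h : IsSubsquare q S₁ S₂ S₃) {x : Q} (hx : x ∈ S₁) :
    q.mul x '' S₂ = S₃ := by
  refine Set.Subset.antisymm ?_ fun z hz => ⟨q.ldiv x z, h.2.1 x hx z hz, q.mul_ldiv x z⟩
  rintro _ ⟨y, hy, rfl⟩
  exact h.1 x hx y hy

theorem image_mul_right (h : IsSubsquare q S₁ S₂ S₃) {y : Q} (hy : y ∈ S₂) :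
    (q.mul · y) '' S₁ = S₃ := by
  refine Set.Subset.antisymm ?_ fun z hz => ⟨q.rdiv z y, h.2.2 z hz y hy, q.rdiv_mul z y⟩
  rintro _ ⟨x, hx, rfl⟩
  exact h.1 x hx y hy

theorem nonempty_left_and_middle (h : IsSubsquare q S₁ S₂ S₃)
    (htwo : (S₁.Nonempty ∧ S₂.Nonempty) ∨ (S₁.Nonempty ∧ S₃.Nonempty) ∨
      (S₂.Nonempty ∧ S₃.Nonempty)) :
    S₁.Nonempty ∧ S₂.Nonempty := by
  rcases htwo with h₁₂ | ⟨⟨x, hx⟩, ⟨z, hz⟩⟩ | ⟨⟨y, hy⟩, ⟨z, hz⟩⟩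
  · exact h₁₂
  · exact ⟨⟨x, hx⟩, ⟨q.ldiv x z, h.2.1 x hx z hz⟩⟩
  · exact ⟨⟨q.rdiv z y, h.2.2 z hz y hy⟩, ⟨y, hy⟩⟩

theorem ncard_eq (h : IsSubsquare q S₁ S₂ S₃) (h₁ : S₁.Nonempty) (h₂ : S₂.Nonempty) :
    S₁.ncard = S₂.ncard ∧ S₂.ncard = S₃.ncard := by
  obtain ⟨x, hx⟩ := h₁
  obtain ⟨y, hy⟩ := h₂
  have h₂₃ : S₂.ncard = S₃.ncard := by
    rw [← h.image_mul_left hx, Set.ncard_image_of_injective _ (q.mul_right_injective x)]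
  have h₁₃ : S₁.ncard = S₃.ncard := by
    rw [← h.image_mul_right hy, Set.ncard_image_of_injective _ (q.mul_left_injective y)]
  exact ⟨h₁₃.trans h₂₃.symm, h₂₃⟩

end IsSubsquare

namespace LightDualMultinet

variable {Q P : Type*} {q : Quasigroup Q} (N : @LightDualMultinet Q P q)

def IsBlockClosed (B : Set P) : Prop :=
  ∀ C ∈ N.M, ∀ p ∈ C, ∀ p' ∈ C, ∀ p'' ∈ C, p ≠ p' → p ∈ B → p' ∈ B → p'' ∈ B

theorem α₁_ne_α₂ (x y : Q) : N.α₁ x ≠ N.α₂ y := fun h =>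
  Set.disjoint_left.1 N.disj₁₂ ⟨x, rfl⟩ ⟨y, h.symm⟩

theorem α₁_ne_α₃ (x z : Q) : N.α₁ x ≠ N.α₃ z := fun h =>
  Set.disjoint_left.1 N.disj₁₃ ⟨x, rfl⟩ ⟨z, h.symm⟩

theorem α₂_ne_α₃ (y z : Q) : N.α₂ y ≠ N.α₃ z := fun h =>
  Set.disjoint_left.1 N.disj₂₃ ⟨y, rfl⟩ ⟨z, h.symm⟩

theorem IsBlockClosed.isSubsquare {N : @LightDualMultinet Q P q} {B : Set P}
    (hB : N.IsBlockClosed B) :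
    IsSubsquare q {x | N.α₁ x ∈ B} {y | N.α₂ y ∈ B} {z | N.α₃ z ∈ B} := by
  refine ⟨fun x hx y hy => ?_, fun x hx z hz => ?_, fun z hz y hy => ?_⟩
  · obtain ⟨C, hC, h₁, h₂, h₃⟩ := N.collinear x y
    exact hB C hC _ h₁ _ h₂ _ h₃ (N.α₁_ne_α₂ x y) hx hy
  · obtain ⟨C, hC, h₁, h₂, h₃⟩ := N.collinear x (q.ldiv x z)
    rw [q.mul_ldiv] at h₃
    exact hB C hC _ h₁ _ h₃ _ h₂ (N.α₁_ne_α₃ x z) hx hz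
  · obtain ⟨C, hC, h₁, h₂, h₃⟩ := N.collinear (q.rdiv z y) y
    rw [q.rdiv_mul] at h₃
    exact hB C hC _ h₂ _ h₃ _ h₁ (N.α₂_ne_α₃ y z) hy hz

end LightDualMultinet

section Projective

open scoped LinearAlgebra.Projectivization

variable {𝕃 V : Type*} [Field 𝕃] [AddCommGroup V] [Module 𝕃 V]

theorem Projectivization.linearIndependent_pair_rep {u v : ℙ 𝕃 V} (h : u ≠ v) :
    LinearIndependent 𝕃 ![u.rep, v.rep] := by
  have h₂ := independent_iff.1 ((independent_pair_iff_ne u v).2 h)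
  convert h₂ using 1
  ext i
  fin_cases i <;> rfl

theorem Submodule.mem_of_not_linearIndependent_of_finrank_eq_two {W : Submodule 𝕃 V}
    (hW : Module.finrank 𝕃 W = 2) {u v w : V} (hu : u ∈ W) (hv : v ∈ W)
    (huv : LinearIndependent 𝕃 ![u, v]) (h : ¬ LinearIndependent 𝕃 ![u, v, w]) : w ∈ W := by
  have : FiniteDimensional 𝕃 W := Module.finite_of_finrank_eq_succ hW
  have hspan : Submodule.span 𝕃 (Set.range ![u, v]) = W := by
    refine Submodule.eq_of_le_of_finrank_eq ?_ ?_
    · rw [Submodule.span_le, Matrix.range_cons, Matrix.range_cons, Matrix.range_empty]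
      simp [Set.insert_subset_iff, hu, hv]
    · rw [hW, finrank_span_eq_card huv, Fintype.card_fin]
  by_contra hw
  rw [← hspan] at hw
  apply h
  convert linearIndependent_finSnoc.2 ⟨huv, hw⟩ using 1
  ext i
  fin_cases i <;> rfl

theorem LightDualMultinet.isBlockClosed_preimage_line {Q P : Type*} {q : Quasigroup Q}
    (N : @LightDualMultinet Q P q) {β : P → ℙ 𝕃 V} (hinj : Function.Injective β)
    (hcol : ∀ C ∈ N.M, ∀ p₁ p₂ p₃ : P, p₁ ∈ C → p₂ ∈ C → p₃ ∈ C →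
      ¬ LinearIndependent 𝕃 ![(β p₁).rep, (β p₂).rep, (β p₃).rep])
    {W : Submodule 𝕃 V} (hW : Module.finrank 𝕃 W = 2) :
    N.IsBlockClosed {p | (β p).rep ∈ W} :=
  fun C hC p hp p' hp' p'' hp'' hne h h' =>
    Submodule.mem_of_not_linearIndependent_of_finrank_eq_two hW h h'
      (Projectivization.linearIndependent_pair_rep (hinj.ne hne)) (hcol C hC p p' p'' hp hp' hp'')

end Projective

theorem merged_block_gives_subsquare_general {Q P : Type*}
    (q : Quasigroup Q) (N : @LightDualMultinet Q P q)
    {𝕃 : Type*} [Field 𝕃]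
    (β : P → Projectivization 𝕃 (Fin 3 → 𝕃))
    (hinj : Function.Injective β)
    (hcol : ∀ C ∈ N.M, ∀ p₁ p₂ p₃ : P, p₁ ∈ C → p₂ ∈ C → p₃ ∈ C →
      ¬ LinearIndependent 𝕃 ![(β p₁).rep, (β p₂).rep, (β p₃).rep])
    (B : Set P) (W : Submodule 𝕃 (Fin 3 → 𝕃))
    (hW : Module.finrank 𝕃 W = 2)
    (hBW : B = {p : P | (β p).rep ∈ W})
    (S₁ S₂ S₃ : Set Q)
    (hS₁ : S₁ = {x : Q | N.α₁ x ∈ B}) (hS₂ : S₂ = {y : Q | N.α₂ y ∈ B})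
    (hS₃ : S₃ = {z : Q | N.α₃ z ∈ B})
    (htwo : (S₁.Nonempty ∧ S₂.Nonempty) ∨ (S₁.Nonempty ∧ S₃.Nonempty) ∨
      (S₂.Nonempty ∧ S₃.Nonempty)) :
    IsSubsquare q S₁ S₂ S₃ ∧ S₁.ncard = S₂.ncard ∧ S₂.ncard = S₃.ncard := by
  have hsub : IsSubsquare q S₁ S₂ S₃ := by
    subst hBW hS₁ hS₂ hS₃
    exact (N.isBlockClosed_preimage_line hinj hcol hW).isSubsquare
  obtain ⟨h₁, h₂⟩ := hsub.nonempty_left_and_middle htwo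
  exact ⟨hsub, hsub.ncard_eq h₁ h₂⟩

/-- If `B` is a merged block of a weak projective embedding `β` of an abstract
light dual multinet (the preimage of a projective line, with more than one
point, not a block of the multinet) which meets at least two of the three
components, then `(S₁,S₂,S₃)` with `S_i = {x : α_i x ∈ B}` is a subsquare of
the labeling quasigroup; in particular `|S₁| = |S₂| = |S₃|`. -/
theorem merged_block_gives_subsquare {Q P : Type*} [Fintype Q]
    (q : Quasigroup Q) (N : @LightDualMultinet Q P q)
    {𝕃 : Type*} [Field 𝕃]
    (β : P → Projectivization 𝕃 (Fin 3 → 𝕃))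
    (hinj : Function.Injective β)
    (hspan : ∃ p₁ p₂ p₃ : P,
      LinearIndependent 𝕃 ![(β p₁).rep, (β p₂).rep, (β p₃).rep])
    (hcol : ∀ C ∈ N.M, ∀ p₁ p₂ p₃ : P, p₁ ∈ C → p₂ ∈ C → p₃ ∈ C →
      ¬ LinearIndependent 𝕃 ![(β p₁).rep, (β p₂).rep, (β p₃).rep])
    (B : Set P) (W : Submodule 𝕃 (Fin 3 → 𝕃))
    (hW : Module.finrank 𝕃 W = 2)
    (hBW : B = {p : P | (β p).rep ∈ W})
    (hBcard : 1 < B.ncard) (hBnotblock : B ∉ N.M)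
    (S₁ S₂ S₃ : Set Q)
    (hS₁ : S₁ = {x : Q | N.α₁ x ∈ B}) (hS₂ : S₂ = {y : Q | N.α₂ y ∈ B})
    (hS₃ : S₃ = {z : Q | N.α₃ z ∈ B})
    (htwo : (S₁.Nonempty ∧ S₂.Nonempty) ∨ (S₁.Nonempty ∧ S₃.Nonempty) ∨
      (S₂.Nonempty ∧ S₃.Nonempty)) :
    IsSubsquare q S₁ S₂ S₃ ∧ S₁.ncard = S₂.ncard ∧ S₂.ncard = S₃.ncard :=
  merged_block_gives_subsquare_general q N β hinj hcol B W hW hBW S₁ S₂ S₃ hS₁ hS₂ hS₃ htwo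
end
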